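/- Converse failure of the isometric translation principle: there exists a Banach chain complex C (concentrated in degrees 0 and 1, given by the inclusion ℓ¹ ↪ c₀) and a morphism f : C → C (multiplication by a constant c with |c| ∉ {0,1}) such that H_*(f) is an isometric isomorphism, but H^1(f') is an isomorphism that is not isometric (there exist classes in H¹(C') of non-zero semi-norm, and H^1(f') multiplies the semi-norm by |c| ≠ 1). -/

import Mathlib

open scoped ZeroAtInfty

noncomputable section

/-- The Banach chain complex concentrated in degrees 0 and 1, given by the inclusion
`ℓ¹ ↪ c₀`: `C₀ = c₀`, `C₁ = ℓ¹`, `Cₙ = 0` for `n ≥ 2`. -/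
abbrev XC : ℕ → Type
  | 0 => C₀(ℕ, ℝ)
  | 1 => lp (fun _ : ℕ => ℝ) 1
  | (_ + 2) => EuclideanSpace ℝ (Fin 0)

instance : ∀ n, NormedAddCommGroup (XC n)
  | 0 => inferInstanceAs (NormedAddCommGroup C₀(ℕ, ℝ))
  | 1 => inferInstanceAs (NormedAddCommGroup (lp (fun _ : ℕ => ℝ) 1))
  | (_ + 2) => inferInstanceAs (NormedAddCommGroup (EuclideanSpace ℝ (Fin 0)))

instance : ∀ n, NormedSpace ℝ (XC n)
  | 0 => inferInstanceAs (NormedSpace ℝ C₀(ℕ, ℝ))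
  | 1 => inferInstanceAs (NormedSpace ℝ (lp (fun _ : ℕ => ℝ) 1))
  | (_ + 2) => inferInstanceAs (NormedSpace ℝ (EuclideanSpace ℝ (Fin 0)))

instance : ∀ n, CompleteSpace (XC n)
  | 0 => inferInstanceAs (CompleteSpace C₀(ℕ, ℝ))
  | 1 => inferInstanceAs (CompleteSpace (lp (fun _ : ℕ => ℝ) 1))
  | (_ + 2) => inferInstanceAs (CompleteSpace (EuclideanSpace ℝ (Fin 0)))

/-- The inclusion `ℓ¹ ↪ c₀` as a bounded linear map. -/
def incl : lp (fun _ : ℕ => ℝ) 1 →L[ℝ] C₀(ℕ, ℝ) :=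
  LinearMap.mkContinuous
    { toFun := fun f =>
        ZeroAtInftyContinuousMap.mk ⟨fun n => f n, continuous_of_discreteTopology⟩ (by
          rw [cocompact_eq_atTop]
          have hs : Summable fun n => ‖(f : ℕ → ℝ) n‖ := by
            have h := (lp.memℓp f).summable (p := 1) (by norm_num)
            simpa using h
          exact hs.of_norm.tendsto_atTop_zero)
      map_add' := by
        intro f g
        ext n
        exact congrFun (lp.coeFn_add f g) n
      map_smul' := by
        intro m f
        ext n
        exact congrFun (lp.coeFn_smul m f) n }
    1
    (by
      intro f
      rw [one_mul, ← ZeroAtInftyContinuousMap.norm_toBCF_eq_norm]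
      refine BoundedContinuousFunction.norm_le (norm_nonneg f) |>.mpr fun n => ?_
      exact lp.norm_apply_le_norm one_ne_zero f n)

/-- The boundary operators of the complex `XC`. -/
def dC : ∀ n, XC (n + 1) →L[ℝ] XC n
  | 0 => incl
  | (n + 1) => 0

/-- Cycles of a chain complex indexed over ℕ. -/
def IsCycle (C : ℕ → Type*) [∀ n, NormedAddCommGroup (C n)] [∀ n, NormedSpace ℝ (C n)]
    (d : ∀ n, C (n + 1) →L[ℝ] C n) : ∀ n, C n → Prop
  | 0, _ => True
  | (n + 1), x => d n x = 0

/-- Coboundaries of the dual cochain complex. -/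
def IsCobdry (C : ℕ → Type*) [∀ n, NormedAddCommGroup (C n)] [∀ n, NormedSpace ℝ (C n)]
    (d : ∀ n, C (n + 1) →L[ℝ] C n) : ∀ n, (C n →L[ℝ] ℝ) → Prop
  | 0, f => f = 0
  | (n + 1), f => ∃ g : C n →L[ℝ] ℝ, f = g.comp (d n)

/-- Seminorm of the homology class of a cycle. -/
def hSeminorm (C : ℕ → Type*) [∀ n, NormedAddCommGroup (C n)]
    [∀ n, NormedSpace ℝ (C n)] (d : ∀ n, C (n + 1) →L[ℝ] C n) (n : ℕ) (x : C n) : ℝ :=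
  sInf {r : ℝ | ∃ b : C (n + 1), r = ‖x - d n b‖}

/-- Seminorm of the cohomology class of a cocycle of the dual complex. -/
def cSeminorm (C : ℕ → Type*) [∀ n, NormedAddCommGroup (C n)]
    [∀ n, NormedSpace ℝ (C n)] (d : ∀ n, C (n + 1) →L[ℝ] C n) (n : ℕ)
    (φ : C n →L[ℝ] ℝ) : ℝ :=
  sInf {r : ℝ | ∃ g : C n →L[ℝ] ℝ, IsCobdry C d n g ∧ r = ‖φ - g‖}

/-! Homology sees nothing: `H₁ = 0` because `ℓ¹ ↪ c₀` is injective, and every class in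
`H₀ = c₀/ℓ¹` has seminorm zero because finitely supported sequences are dense in `c₀`. So `c • id`
is trivially isometric on homology. Dually, the summation functional `Σ` on `ℓ¹` stays at distance
at least `1` from every coboundary `g ∘ incl`: the indicator of `{0, …, N-1}` has `ℓ¹`-norm `N` but
sup-norm `1`, whence `N (1 - ‖Σ - g ∘ incl‖) ≤ ‖g‖` for all `N`. As the cohomology seminorm is
homogeneous, `H¹(c • id)` multiplies it by `|c| ≠ 1`. -/

section ChainComplex

variable {C : ℕ → Type*} [∀ n, NormedAddCommGroup (C n)] [∀ n, NormedSpace ℝ (C n)]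
  {d : ∀ n, C (n + 1) →L[ℝ] C n}

theorem IsCycle.smul {n : ℕ} {x : C n} (hx : IsCycle C d n x) (a : ℝ) :
    IsCycle C d n (a • x) := by
  cases n with
  | zero => trivial
  | succ n => exact (show d n (a • x) = 0 by rw [map_smul, show d n x = 0 from hx, smul_zero])

theorem exists_boundary_of_smul {n : ℕ} {c : ℝ} (hc : c ≠ 0) {x : C n}
    (h : ∃ b, d n b = c • x) : ∃ a, d n a = x := by
  obtain ⟨b, hb⟩ := h
  exact ⟨c⁻¹ • b, by rw [map_smul, hb, inv_smul_smul₀ hc]⟩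

theorem isCobdry_zero (n : ℕ) : IsCobdry C d n 0 := by
  cases n with
  | zero => rfl
  | succ n => exact ⟨0, rfl⟩

theorem IsCobdry.smul {n : ℕ} {g : C n →L[ℝ] ℝ} (hg : IsCobdry C d n g) (a : ℝ) :
    IsCobdry C d n (a • g) := by
  cases n with
  | zero => exact (show a • g = 0 by rw [show g = 0 from hg, smul_zero])
  | succ n =>
    obtain ⟨h, rfl⟩ := hg
    exact ⟨a • h, (ContinuousLinearMap.smul_comp a h (d n)).symm⟩

theorem hSeminorm_eq_zero_of_mem_closure {n : ℕ} {x : C n}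
    (hx : x ∈ closure (Set.range (d n))) : hSeminorm C d n x = 0 := by
  have hbdd : BddBelow {r : ℝ | ∃ b : C (n + 1), r = ‖x - d n b‖} :=
    ⟨0, by rintro r ⟨b, rfl⟩; exact norm_nonneg _⟩
  refine le_antisymm (le_of_forall_pos_le_add fun ε hε => ?_)
    (le_csInf ⟨_, 0, rfl⟩ (by rintro r ⟨b, rfl⟩; exact norm_nonneg _))
  obtain ⟨_, ⟨b, rfl⟩, hb⟩ := Metric.mem_closure_iff.mp hx ε hε
  rw [dist_eq_norm] at hb
  exact (csInf_le hbdd ⟨b, rfl⟩).trans (by linarith)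

theorem le_cSeminorm {n : ℕ} {φ : C n →L[ℝ] ℝ} {r : ℝ}
    (h : ∀ g, IsCobdry C d n g → r ≤ ‖φ - g‖) : r ≤ cSeminorm C d n φ :=
  le_csInf ⟨_, 0, isCobdry_zero n, rfl⟩ (by rintro _ ⟨g, hg, rfl⟩; exact h g hg)

open scoped Pointwise in
theorem cSeminorm_smul {n : ℕ} {c : ℝ} (hc : c ≠ 0) (ψ : C n →L[ℝ] ℝ) :
    cSeminorm C d n (c • ψ) = |c| * cSeminorm C d n ψ := by
  have hset : {r : ℝ | ∃ g, IsCobdry C d n g ∧ r = ‖c • ψ - g‖}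
      = |c| • {r : ℝ | ∃ g, IsCobdry C d n g ∧ r = ‖ψ - g‖} := by
    ext r
    rw [Set.mem_smul_set]
    constructor
    · rintro ⟨g, hg, rfl⟩
      refine ⟨_, ⟨c⁻¹ • g, hg.smul c⁻¹, rfl⟩, ?_⟩
      rw [smul_eq_mul, ← Real.norm_eq_abs, ← norm_smul, smul_sub, smul_inv_smul₀ hc]
    · rintro ⟨_, ⟨g, hg, rfl⟩, rfl⟩
      refine ⟨c • g, hg.smul c, ?_⟩
      rw [smul_eq_mul, ← Real.norm_eq_abs, ← norm_smul, smul_sub]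
  rw [cSeminorm, cSeminorm, hset, Real.sInf_smul_of_nonneg (abs_nonneg c), smul_eq_mul]

end ChainComplex

open scoped lp

theorem ZeroAtInftyContinuousMap.norm_le_of_forall_le {α : Type*} [TopologicalSpace α]
    {f : C₀(α, ℝ)} {r : ℝ} (hr : 0 ≤ r) (h : ∀ x, ‖f x‖ ≤ r) : ‖f‖ ≤ r := by
  rw [← norm_toBCF_eq_norm]
  exact (BoundedContinuousFunction.norm_le hr).mpr h

theorem incl_apply (f : ℓ¹(ℕ, ℝ)) (n : ℕ) : incl f n = f n := rfl

theorem incl_injective : Function.Injective incl := fun f g h =>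
  lp.ext <| funext fun n => by simpa only [incl_apply] using congrArg (· n) h

def truncL1 (a : ℕ → ℝ) (N : ℕ) : ℓ¹(ℕ, ℝ) :=
  ∑ n ∈ Finset.range N, lp.single 1 n (a n)

theorem truncL1_apply (a : ℕ → ℝ) (N m : ℕ) :
    truncL1 a N m = if m < N then a m else 0 := by
  rw [truncL1, lp.coeFn_sum, Finset.sum_apply]
  simp [lp.single_apply, Pi.single_apply]

theorem incl_denseRange : DenseRange incl := by
  refine fun y => Metric.mem_closure_iff.mpr fun ε hε => ?_
  have hy : Filter.Tendsto y Filter.atTop (nhds 0) := by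
    simpa only [cocompact_eq_atTop] using zero_at_infty y
  obtain ⟨N, hN⟩ := Metric.tendsto_atTop.mp hy (ε / 2) (half_pos hε)
  refine ⟨_, ⟨truncL1 y N, rfl⟩, ?_⟩
  rw [dist_eq_norm]
  refine (ZeroAtInftyContinuousMap.norm_le_of_forall_le (half_pos hε).le fun m => ?_).trans_lt
    (half_lt_self hε)
  rw [ZeroAtInftyContinuousMap.sub_apply, incl_apply, truncL1_apply]
  split_ifs with hm
  · simpa using (half_pos hε).le
  · simpa using (hN m (not_lt.mp hm)).le

theorem eq_zero_of_isCycle_succ {n : ℕ} {x : XC (n + 1)} (hx : IsCycle XC dC (n + 1) x) :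
    x = 0 := by
  cases n with
  | zero => exact incl_injective (hx.trans (map_zero incl).symm)
  | succ n => exact Subsingleton.elim (α := EuclideanSpace ℝ (Fin 0)) _ _

theorem hSeminorm_XC_eq_zero {n : ℕ} {x : XC n} (hx : IsCycle XC dC n x) :
    hSeminorm XC dC n x = 0 := by
  apply hSeminorm_eq_zero_of_mem_closure
  cases n with
  | zero => exact incl_denseRange x
  | succ n => exact eq_zero_of_isCycle_succ hx ▸ subset_closure ⟨0, map_zero _⟩

theorem tsumCLM_truncL1_one (N : ℕ) : lp.tsumCLM ℝ ℕ ℝ (truncL1 1 N) = N := by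
  simp [truncL1, map_sum, tsum_pi_single]

theorem norm_truncL1_one_le (N : ℕ) : ‖truncL1 1 N‖ ≤ N := by
  refine (norm_sum_le _ _).trans_eq ?_
  simp [lp.norm_single]

theorem norm_incl_truncL1_one_le (N : ℕ) : ‖incl (truncL1 1 N)‖ ≤ 1 := by
  refine ZeroAtInftyContinuousMap.norm_le_of_forall_le zero_le_one fun m => ?_
  rw [incl_apply, truncL1_apply]
  split_ifs <;> simp

theorem one_le_norm_tsumCLM_sub_comp_incl (g : C₀(ℕ, ℝ) →L[ℝ] ℝ) :
    1 ≤ ‖lp.tsumCLM ℝ ℕ ℝ - g.comp incl‖ := by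
  set T := lp.tsumCLM ℝ ℕ ℝ - g.comp incl
  have hbound (N : ℕ) : (N : ℝ) * (1 - ‖T‖) ≤ ‖g‖ := by
    have hT : T (truncL1 1 N) ≤ ‖T‖ * N :=
      (le_abs_self _).trans <| (T.le_opNorm _).trans <|
        mul_le_mul_of_nonneg_left (norm_truncL1_one_le N) (norm_nonneg T)
    have hg : g (incl (truncL1 1 N)) ≤ ‖g‖ :=
      (le_abs_self _).trans <| (g.le_opNorm _).trans <|
        mul_le_of_le_one_right (norm_nonneg g) (norm_incl_truncL1_one_le N)
    have hT_eq : T (truncL1 1 N) = N - g (incl (truncL1 1 N)) := by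
      rw [sub_apply, tsumCLM_truncL1_one, ContinuousLinearMap.comp_apply]
    linarith
  by_contra! h
  obtain ⟨N, hN⟩ := exists_nat_gt (‖g‖ / (1 - ‖T‖))
  rw [div_lt_iff₀ (sub_pos.mpr h)] at hN
  linarith [hbound N]

theorem one_le_cSeminorm_tsumCLM : 1 ≤ cSeminorm XC dC 1 (lp.tsumCLM ℝ ℕ ℝ) :=
  le_cSeminorm fun _ ⟨g, hg⟩ => hg ▸ one_le_norm_tsumCLM_sub_comp_incl g

/-- failure of the converse of the isometric translation principle:
for the Banach chain complex `XC` concentrated in degrees 0 and 1 given by the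
inclusion `ℓ¹ ↪ c₀` and the morphism `f = c·id` (with `|c| ∉ {0, 1}`):
`H_*(f)` is an isometric isomorphism, `H^*(f')` is an isomorphism in degree 1, there
are classes in `H¹(XC')` of non-zero seminorm, `H¹(f')` multiplies the seminorm on
`H¹(XC')` by `|c|`, and in particular `H¹(f')` is not isometric. -/
theorem stmt12 (c : ℝ) (hc0 : c ≠ 0) (hc1 : |c| ≠ 1) :
    -- `H_*(f)` is an isomorphism (here `f n = c • id`) ...
    (∀ n, ∀ x : XC n, IsCycle XC dC n x → (∃ b, dC n b = c • x) → ∃ a, dC n a = x) ∧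
    (∀ n, ∀ y : XC n, IsCycle XC dC n y →
      ∃ x : XC n, IsCycle XC dC n x ∧ ∃ b, y - c • x = dC n b) ∧
    -- ... and it is isometric:
    (∀ n, ∀ x : XC n, IsCycle XC dC n x →
      hSeminorm XC dC n (c • x) = hSeminorm XC dC n x) ∧
    -- `H¹(f')` (given by `ψ ↦ ψ ∘ (c • id) = c • ψ`) is an isomorphism:
    (∀ ψ : XC 1 →L[ℝ] ℝ, IsCobdry XC dC 1 (c • ψ) → IsCobdry XC dC 1 ψ) ∧
    (∀ φ : XC 1 →L[ℝ] ℝ, ∃ ψ : XC 1 →L[ℝ] ℝ, IsCobdry XC dC 1 (φ - c • ψ)) ∧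
    -- there are classes in `H¹(XC')` of non-zero seminorm:
    (∃ ψ : XC 1 →L[ℝ] ℝ, cSeminorm XC dC 1 ψ ≠ 0) ∧
    -- `H¹(f')` multiplies the seminorm by `|c|` ...
    (∀ ψ : XC 1 →L[ℝ] ℝ, cSeminorm XC dC 1 (c • ψ) = |c| * cSeminorm XC dC 1 ψ) ∧
    -- ... and hence is not isometric:
    ¬ (∀ ψ : XC 1 →L[ℝ] ℝ, cSeminorm XC dC 1 (c • ψ) = cSeminorm XC dC 1 ψ) := by
  have hψ : cSeminorm XC dC 1 (lp.tsumCLM ℝ ℕ ℝ) ≠ 0 :=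
    (one_pos.trans_le one_le_cSeminorm_tsumCLM).ne'
  refine ⟨fun n x _ => exists_boundary_of_smul hc0,
    fun n y hy => ⟨c⁻¹ • y, hy.smul c⁻¹, 0, by rw [smul_inv_smul₀ hc0, sub_self, map_zero]⟩,
    fun n x hx => by rw [hSeminorm_XC_eq_zero (hx.smul c), hSeminorm_XC_eq_zero hx],
    fun ψ hψ => inv_smul_smul₀ hc0 ψ ▸ hψ.smul c⁻¹,
    fun φ => ⟨c⁻¹ • φ, by rw [smul_inv_smul₀ hc0, sub_self]; exact isCobdry_zero 1⟩,
    ⟨_, hψ⟩, fun ψ => cSeminorm_smul hc0 ψ, fun hiso => hc1 ?_⟩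
  have h := hiso (lp.tsumCLM ℝ ℕ ℝ)
  rw [cSeminorm_smul hc0] at h
  exact mul_right_cancel₀ hψ (h.trans (one_mul _).symm)

end
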